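/- Let d ≥ 3, let m_{i,j} be integers (1 ≤ j ≤ i ≤ d-1), set ε_i := 0 if λ_i = 0 and ε_i := 1 if λ_i < 0, where λ_{d-2} := min{0, m_{d-1,d-1}} and λ_i := min{0, m_{d-1,i+1} + Σ_{k=i+1}^{d-2} λ_k m_{k,i+1}} for i ≤ d-3. For n ∈ {1,…,d-2} and k ≥ 0 define p_{k,n} := Σ over chains n = i_0 < i_1 < ⋯ < i_k < i_{k+1} = d-1 of ∏_{j=1}^{k+1} ε_{i_{j-1}} · m_{i_j, i_{j-1}+1}. Then λ_n = Σ_{k=0}^{d-2-n} p_{k,n} for all n ∈ {1,…,d-2}. -/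

import Mathlib

/-!
Because `ε_i` records whether `λ_i = min 0 X_i` is negative, `λ_i = ε_i X_i`, that is
`λ_i = ε_i (m_{d-1,i+1} + ∑_{t>i} λ_t m_{t,i+1})`. Splitting off the first step `i → i₁` of a
chain shows that the totals `Q_i = ∑_k p_{k,i}` satisfy the same backward recursion (chains too
long to fit below `d - 1` contribute `p_{k,t} = 0`), so `λ_i = Q_i` by downward induction on `i`.
-/

/-- Sum over chains `n = i₀ < i₁ < ⋯ < i_k < i_{k+1} = d-1` of
`∏_{j=1}^{k+1} ε_{i_{j-1}} · m_{i_j, i_{j-1}+1}`. -/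
def pSum (m : ℕ → ℕ → ℤ) (ε : ℕ → ℤ) (d k n : ℕ) : ℤ :=
  ∑ c ∈ Finset.univ.filter
      (fun c : Fin (k + 2) → Fin d =>
        StrictMono c ∧ (c 0 : ℕ) = n ∧ (c (Fin.last (k + 1)) : ℕ) = d - 1),
    ∏ j : Fin (k + 1),
      ε (c j.castSucc : ℕ) * m (c j.succ : ℕ) ((c j.castSucc : ℕ) + 1)

open Finset

lemma eq_mul_of_eq_min_zero {α : Type*} [MulZeroOneClass α] [LinearOrder α] {a x e : α}
    (ha : a = min 0 x) (he : (a = 0 → e = 0) ∧ (a < 0 → e = 1)) : a = e * x := by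
  rcases (ha ▸ min_le_left 0 x : a ≤ 0).lt_or_eq with hneg | hzero
  · have hx : x < 0 := by simpa [ha] using hneg
    rw [he.2 hneg, one_mul, ha, min_eq_right hx.le]
  · rw [hzero, he.1 hzero, zero_mul]

lemma StrictMono.apply_zero_add_le {k : ℕ} {c : Fin (k + 1) → ℕ} (hc : StrictMono c)
    (j : Fin (k + 1)) : c 0 + j ≤ c j := by
  induction j using Fin.induction with
  | zero => simp
  | succ i ih =>
    have := hc i.castSucc_lt_succ
    simp only [Fin.val_succ, Fin.val_castSucc] at ih ⊢
    omega

section pSum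

variable (m : ℕ → ℕ → ℤ) (ε : ℕ → ℤ) {d k n : ℕ}

lemma pSum_eq_zero (h : d - 1 - n ≤ k) : pSum m ε d k n = 0 := by
  refine sum_eq_zero fun c hc => absurd hc ?_
  simp only [mem_filter, mem_univ, true_and, not_and]
  intro hc h0 hl
  have := (Fin.val_strictMono.comp hc).apply_zero_add_le (Fin.last (k + 1))
  simp only [Function.comp, Fin.val_last, h0, hl] at this
  omega

lemma pSum_zero (hn : n + 1 < d) : pSum m ε d 0 n = ε n * m (d - 1) (n + 1) := by
  have hchain : univ.filter (fun c : Fin 2 → Fin d =>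
      StrictMono c ∧ (c 0 : ℕ) = n ∧ (c (Fin.last 1) : ℕ) = d - 1)
      = {![⟨n, by omega⟩, ⟨d - 1, by omega⟩]} := by
    ext c
    simp only [mem_filter, mem_univ, true_and, mem_singleton, Fin.strictMono_iff_lt_succ,
      Fin.forall_fin_one, Fin.ext_iff, funext_iff, Fin.forall_fin_two, Fin.castSucc_zero,
      Fin.succ_zero_eq_one, Matrix.cons_val_zero, Matrix.cons_val_one, Fin.lt_def, Fin.reduceLast,
      Fin.isValue]
    omega
  rw [pSum, hchain, sum_singleton]
  simp

lemma pSum_succ_eq_sum_tail (hn : n < d) :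
    pSum m ε d (k + 1) n =
      ∑ c ∈ univ.filter (fun c : Fin (k + 2) → Fin d =>
          StrictMono c ∧ n < (c 0 : ℕ) ∧ (c (Fin.last (k + 1)) : ℕ) = d - 1),
        ε n * m (c 0 : ℕ) (n + 1) *
          ∏ j : Fin (k + 1), ε (c j.castSucc : ℕ) * m (c j.succ : ℕ) ((c j.castSucc : ℕ) + 1) := by
  refine sum_nbij' Fin.tail (fun c => Fin.cons (⟨n, hn⟩ : Fin d) c) (fun c hc => ?_)
    (fun c hc => ?_) (fun c hc => ?_) (fun c _ => Fin.tail_cons _ _) (fun c hc => ?_)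
  · simp only [mem_filter, mem_univ, true_and] at hc ⊢
    obtain ⟨hc, h0, hl⟩ := hc
    rw [← Fin.cons_self_tail c, Fin.strictMono_cons] at hc
    exact ⟨hc.2, h0 ▸ hc.1 0, hl⟩
  · simp only [mem_filter, mem_univ, true_and] at hc ⊢
    obtain ⟨hc, h0, hl⟩ := hc
    refine ⟨Fin.strictMono_cons.2 ⟨fun j => h0.trans_le (hc.monotone (Fin.zero_le j)), hc⟩,
      rfl, ?_⟩
    rwa [← Fin.succ_last, Fin.cons_succ]
  · simp only [mem_filter, mem_univ, true_and] at hc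
    obtain ⟨-, rfl, -⟩ := hc
    exact Fin.cons_self_tail c
  · simp only [mem_filter, mem_univ, true_and] at hc
    rw [Fin.prod_univ_succ, ← hc.2.1]
    rfl

lemma pSum_succ (hn : n < d) :
    pSum m ε d (k + 1) n = ∑ t ∈ Icc (n + 1) (d - 2), ε n * m t (n + 1) * pSum m ε d k t := by
  rw [pSum_succ_eq_sum_tail m ε hn, ← sum_fiberwise_of_maps_to (g := fun c => (c 0 : ℕ))
    (t := Icc (n + 1) (d - 2))]
  · refine sum_congr rfl fun t ht => ?_
    rw [pSum, mul_sum, filter_filter]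
    refine sum_congr (filter_congr fun c _ => ?_) fun c hc => ?_
    · rw [mem_Icc] at ht
      constructor
      · rintro ⟨⟨hc, -, hl⟩, h0⟩; exact ⟨hc, h0, hl⟩
      · rintro ⟨hc, h0, hl⟩; exact ⟨⟨hc, by omega, hl⟩, h0⟩
    · rw [(mem_filter.1 hc).2.2.1]
  · intro c hc
    simp only [mem_filter, mem_univ, true_and] at hc
    obtain ⟨hc, h0, hl⟩ := hc
    have := hc (Fin.last_pos' (n := k + 1))
    rw [mem_Icc]
    omega

lemma sum_range_pSum (hn : n + 1 < d) :
    ∑ k ∈ range (d - 1 - n), pSum m ε d k n =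
      ε n * (m (d - 1) (n + 1) +
        ∑ t ∈ Icc (n + 1) (d - 2), (∑ k ∈ range (d - 1 - t), pSum m ε d k t) * m t (n + 1)) := by
  rw [show d - 1 - n = d - 2 - n + 1 by omega, sum_range_succ', pSum_zero m ε hn, add_comm,
    mul_add, mul_sum]
  simp only [pSum_succ m ε (show n < d by omega)]
  rw [sum_comm]
  refine congrArg _ (sum_congr rfl fun t ht => ?_)
  rw [mem_Icc] at ht
  have hext : ∑ k ∈ range (d - 1 - t), pSum m ε d k t = ∑ k ∈ range (d - 2 - n), pSum m ε d k t :=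
    sum_subset (range_subset_range.2 (by omega)) fun k _ hk => pSum_eq_zero m ε (by simpa using hk)
  rw [hext, sum_mul, mul_sum]
  exact sum_congr rfl fun _ _ => by ring

end pSum

theorem stmt4_general (d : ℕ) (m : ℕ → ℕ → ℤ)
    (lam : ℕ → ℤ)
    (hlamtop : lam (d - 2) = min 0 (m (d - 1) (d - 1)))
    (hlam : ∀ i, 1 ≤ i → i ≤ d - 3 →
      lam i = min 0 (m (d - 1) (i + 1) + ∑ k ∈ Finset.Icc (i + 1) (d - 2), lam k * m k (i + 1)))
    (ε : ℕ → ℤ)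
    (hε : ∀ i, (lam i = 0 → ε i = 0) ∧ (lam i < 0 → ε i = 1))
    (n : ℕ) (hn1 : 1 ≤ n) (hn : n ≤ d - 2) :
    lam n = ∑ k ∈ Finset.range (d - 1 - n), pSum m ε d k n := by
  have hlam_eq : ∀ i, 1 ≤ i → i ≤ d - 2 →
      lam i = ε i * (m (d - 1) (i + 1) + ∑ k ∈ Icc (i + 1) (d - 2), lam k * m k (i + 1)) := by
    intro i hi1 hi
    refine eq_mul_of_eq_min_zero ?_ (hε i)
    rcases hi.lt_or_eq with hlt | rfl
    · exact hlam i hi1 (by omega)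
    · rw [Icc_eq_empty (by omega), sum_empty, add_zero, show d - 2 + 1 = d - 1 by omega, hlamtop]
  induction h : d - n using Nat.strong_induction_on generalizing n with
  | _ j ih =>
    rw [hlam_eq n hn1 hn, sum_range_pSum m ε (by omega)]
    refine congrArg _ (congrArg _ (sum_congr rfl fun t ht => ?_))
    rw [mem_Icc] at ht
    rw [ih (d - t) (by omega) t (by omega) ht.2 rfl]

theorem stmt4 (d : ℕ) (hd : 3 ≤ d) (m : ℕ → ℕ → ℤ)
    (lam : ℕ → ℤ)
    (hlamtop : lam (d - 2) = min 0 (m (d - 1) (d - 1)))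
    (hlam : ∀ i, 1 ≤ i → i ≤ d - 3 →
      lam i = min 0 (m (d - 1) (i + 1) + ∑ k ∈ Finset.Icc (i + 1) (d - 2), lam k * m k (i + 1)))
    (ε : ℕ → ℤ)
    (hε : ∀ i, (lam i = 0 → ε i = 0) ∧ (lam i < 0 → ε i = 1))
    (n : ℕ) (hn1 : 1 ≤ n) (hn : n ≤ d - 2) :
    lam n = ∑ k ∈ Finset.range (d - 1 - n), pSum m ε d k n :=
  stmt4_general d m lam hlamtop hlam ε hε n hn1 hn
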